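/- arXiv:2302.02072 — 4 statements merged into one kernel-verified Lean document; each statement's English description precedes it below -/
import Mathlib

section
/- Let X be a reflexive real Banach space, H a real Hilbert space, and let f : X × H → ℝ∪{±∞} be weakly lower semicontinuous and weakly level-compact. Then the perturbation function β : H → ℝ∪{±∞} defined by β(z) := inf_{x∈X} f(x,z) is sequentially weakly lower semicontinuous: whenever z_n ⇀ z weakly in H, β(z) ≤ liminf_{n→∞} β(z_n). -/
open Filter Topology Bornology

noncomputable section

/-- A real normed space is *reflexive* if the canonical embedding into its double dual is
surjective. -/
def IsReflexiveSpace (X : Type*) [NormedAddCommGroup X] [NormedSpace ℝ X] : Prop :=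
  Function.Surjective ⇑(NormedSpace.inclusionInDoubleDual ℝ X)

/-- A set is *weakly compact* if it is compact in the weak topology. -/
def WCompact {X : Type*} [NormedAddCommGroup X] [NormedSpace ℝ X] (S : Set X) : Prop :=
  IsCompact (show Set (WeakSpace ℝ X) from S)

/-- A set is *weakly open* if it is open in the weak topology. -/
def WOpen {X : Type*} [NormedAddCommGroup X] [NormedSpace ℝ X] (S : Set X) : Prop :=
  IsOpen (show Set (WeakSpace ℝ X) from S)

/-- A set of pairs is *weakly compact* if it is compact in the product of the weak
topologies. -/
def WCompact2 {X H : Type*} [NormedAddCommGroup X] [NormedSpace ℝ X]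
    [NormedAddCommGroup H] [NormedSpace ℝ H] (S : Set (X × H)) : Prop :=
  IsCompact (show Set (WeakSpace ℝ X × WeakSpace ℝ H) from S)

/-- *Weak lower semicontinuity* of an extended-real-valued function. -/
def WLsc {X : Type*} [NormedAddCommGroup X] [NormedSpace ℝ X] (g : X → EReal) : Prop :=
  LowerSemicontinuous (show WeakSpace ℝ X → EReal from g)

/-- Weak lower semicontinuity of a function of two variables, w.r.t. the product of the
weak topologies. -/
def WLsc2 {X H : Type*} [NormedAddCommGroup X] [NormedSpace ℝ X]
    [NormedAddCommGroup H] [NormedSpace ℝ H] (g : X × H → EReal) : Prop :=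
  LowerSemicontinuous (show WeakSpace ℝ X × WeakSpace ℝ H → EReal from g)

/-- Weak upper semicontinuity of a real-valued function. -/
def WUsc {X : Type*} [NormedAddCommGroup X] [NormedSpace ℝ X] (g : X → ℝ) : Prop :=
  UpperSemicontinuous (show WeakSpace ℝ X → ℝ from g)

/-- Weak (sequential) convergence of a sequence: `L (u n) → L l` for every continuous
linear functional `L`. -/
def WSeqConv {X : Type*} [NormedAddCommGroup X] [NormedSpace ℝ X] (u : ℕ → X) (l : X) : Prop :=
  ∀ L : StrongDual ℝ X, Tendsto (fun n => L (u n)) atTop (𝓝 (L l))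

/-- Weak level-compactness of a dualizing parameterization `f`. -/
def WLevelCompact {X H : Type*} [NormedAddCommGroup X] [NormedSpace ℝ X]
    [NormedAddCommGroup H] [NormedSpace ℝ H] (f : X → H → EReal) : Prop :=
  ∀ (z₀ : H) (α : ℝ), ∃ U : Set H, WOpen U ∧ z₀ ∈ U ∧
    ∃ B : Set X, WCompact B ∧ ∀ z ∈ U, {x : X | f x z ≤ (α : EReal)} ⊆ B

section Lagrangian

variable {X H : Type*} [NormedAddCommGroup H] [InnerProductSpace ℝ H]

/-- The augmented Lagrangian integrand `(x,z) ↦ f(x,z) − ⟨A z, y⟩ + c σ(z)`. -/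
def lagr (f : X → H → EReal) (σ : H → EReal) (A : H → H) (y : H) (c : ℝ) (x : X) (z : H) :
    EReal :=
  f x z - ((inner ℝ (A z) y : ℝ) : EReal) + (c : EReal) * σ z

/-- The dual function `q(y,c) = inf_{x,z} (f(x,z) − ⟨A z, y⟩ + c σ(z))`. -/
def dualq (f : X → H → EReal) (σ : H → EReal) (A : H → H) (y : H) (c : ℝ) : EReal :=
  ⨅ (x : X) (z : H), lagr f σ A y c x z

/-- The dual optimal value `M_D = sup_{(y,c) ∈ H × ℝ₊} q(y,c)`. -/
def MD (f : X → H → EReal) (σ : H → EReal) (A : H → H) : EReal :=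
  ⨆ (y : H) (c : ℝ) (_ : 0 ≤ c), dualq f σ A y c

/-- `(y,c)` is a solution of the dual problem. -/
def DualSol (f : X → H → EReal) (σ : H → EReal) (A : H → H) (y : H) (c : ℝ) : Prop :=
  0 ≤ c ∧ ∀ (y' : H) (c' : ℝ), 0 ≤ c' → dualq f σ A y' c' ≤ dualq f σ A y c

/-- The function `γ_n(z) = β(z) − ⟨A z, ȳ⟩ + n σ(z)`, where `β(z) = inf_x f(x,z)`. -/
def gam (f : X → H → EReal) (σ : H → EReal) (A : H → H) (ybar : H) (n : ℕ) (z : H) : EReal :=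
  (⨅ x : X, f x z) - ((inner ℝ (A z) ybar : ℝ) : EReal) + (n : EReal) * σ z

end Lagrangian

/-- The primal optimal value `M_P = inf_x φ(x)`. -/
def MP {X : Type*} (φ : X → EReal) : EReal := ⨅ x, φ x

/-- The tube lemma over `B` turns `α < f x z₀` on `B` into `α < f x z` on `B` for all `z` near
`z₀`; off `B` this holds near `z₀` by the choice of `B`. -/
theorem lowerSemicontinuousAt_iInf_of_uniformly_compact_sublevel {X Z : Type*}
    [TopologicalSpace X] [TopologicalSpace Z] {f : X → Z → EReal}
    (hf : LowerSemicontinuous fun p : X × Z => f p.1 p.2) {z₀ : Z}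
    (hlev : ∀ α : ℝ, ∃ U ∈ 𝓝 z₀, ∃ B : Set X, IsCompact B ∧
      ∀ z ∈ U, ∀ x, f x z ≤ α → x ∈ B) :
    LowerSemicontinuousAt (fun z => ⨅ x, f x z) z₀ := by
  intro y hy
  obtain ⟨α, hyα, hαβ⟩ := EReal.exists_between_coe_real hy
  obtain ⟨U, hU, B, hB, hsub⟩ := hlev α
  have htube : ∀ᶠ z in 𝓝 z₀, ∀ x ∈ B, (α : EReal) < f x z :=
    hB.eventually_forall_of_forall_eventually fun x _ =>
      (continuous_swap.tendsto (z₀, x)).eventually (hf (x, z₀) α (hαβ.trans_le (iInf_le _ x)))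
  filter_upwards [htube, hU] with z hzB hzU
  refine hyα.trans_le (le_iInf fun x => ?_)
  by_contra! hx
  exact (hzB x (hsub z hzU x hx.le)).not_gt hx

theorem WSeqConv.tendsto_weakSpace {E : Type*} [NormedAddCommGroup E] [NormedSpace ℝ E]
    {u : ℕ → E} {l : E} (h : WSeqConv u l) :
    Tendsto (show ℕ → WeakSpace ℝ E from u) atTop (𝓝 (show WeakSpace ℝ E from l)) :=
  (WeakBilin.tendsto_iff_forall_eval_tendsto (topDualPairing ℝ E).flip fun _ _ hxy =>
    SeparatingDual.eq_iff_forall_dual_eq.2 fun g => LinearMap.congr_fun hxy g).2 h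

theorem perturbation_seq_weakly_lsc_general
    {X H : Type*} [NormedAddCommGroup X] [NormedSpace ℝ X]
    [NormedAddCommGroup H] [InnerProductSpace ℝ H]
    (f : X → H → EReal)
    (hflsc : WLsc2 fun p : X × H => f p.1 p.2)
    (hflev : WLevelCompact f)
    (zseq : ℕ → H) (l : H) (hconv : WSeqConv zseq l) :
    (⨅ x, f x l) ≤ Filter.liminf (fun n => ⨅ x, f x (zseq n)) atTop := by
  let fW : WeakSpace ℝ X → WeakSpace ℝ H → EReal := f
  have hβ : LowerSemicontinuousAt (fun z => ⨅ x, fW x z) l := by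
    refine lowerSemicontinuousAt_iInf_of_uniformly_compact_sublevel hflsc fun α => ?_
    obtain ⟨U, hUopen, hlU, B, hB, hsub⟩ := hflev l α
    exact ⟨U, hUopen.mem_nhds hlU, B, hB, fun z hz x hx => hsub z hz hx⟩
  exact hβ.le_liminf.trans hconv.tendsto_weakSpace.liminf_le_liminf_comp

/-- If `f` is weakly lsc and weakly level-compact, then the perturbation
function `β(z) = inf_x f(x,z)` is sequentially weakly lower semicontinuous. -/
theorem perturbation_seq_weakly_lsc
    {X H : Type*} [NormedAddCommGroup X] [NormedSpace ℝ X] [CompleteSpace X]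
    [NormedAddCommGroup H] [InnerProductSpace ℝ H] [CompleteSpace H]
    (hrefl : IsReflexiveSpace X) (f : X → H → EReal)
    (hflsc : WLsc2 fun p : X × H => f p.1 p.2)
    (hflev : WLevelCompact f)
    (zseq : ℕ → H) (l : H) (hconv : WSeqConv zseq l) :
    (⨅ x, f x l) ≤ Filter.liminf (fun n => ⨅ x, f x (zseq n)) atTop :=
  perturbation_seq_weakly_lsc_general f hflsc hflev zseq l hconv
end
end

section
/- Assume (H0)–(H2), (A0), (A1), and that the augmenting function σ is conditionally coercive with σ(0)=0 and argmin σ = {0}. Suppose there exists (ȳ,c̄) ∈ H × ℝ₊ with q(ȳ,c̄) > −∞. For n ∈ ℕ define γ_n : H → ℝ∪{±∞} by γ_n(z) := β(z) − ⟨A(z),ȳ⟩ + n σ(z), where β(z) := inf_{x∈X} f(x,z). Then there exist n₀ ∈ ℕ and a sequence (v_n) ⊂ H such that: (i) γ_n(v_n) = inf_{z∈H} γ_n(z) for all n ≥ n₀; and (ii) the sequence (v_n) is bounded and converges weakly to 0. -/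
open Filter Topology Bornology

noncomputable section

/-!
Fix `x₀` with `φ(x₀) < ∞`. For `n > c̄`, the dual bound `q(ȳ, c̄) ≤ L_c̄(x, z)` shows that on
the sublevel set `{L_n ≤ φ(x₀)}` of the augmented Lagrangian `L_n = lagr f σ A ȳ n` one has
`σ z ≤ (φ(x₀) - q(ȳ, c̄)) / (n - c̄)`. For large `n` this keeps `z` in the bounded set
`{σ ≤ K_σ}`, hence in a weakly compact ball, and level-compactness of `f` over that ball confines
`x` to a weakly compact set. So `L_n` attains its minimum over `X × H` at some `(x_n, v_n)`, and
`v_n` minimizes `γ_n = inf_x L_n(x, ·)`. As `σ(v_n) → 0`, the `v_n` stay in the weakly compact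
ball and `σ` is weakly lsc with `0` as its only zero, the `v_n` converge weakly to `0`.
-/

section Semicontinuity

variable {α : Type*} [TopologicalSpace α]

lemma LowerSemicontinuous.add_of_ne_bot {g h : α → EReal} (hg : LowerSemicontinuous g)
    (hh : LowerSemicontinuous h) (hgb : ∀ p, g p ≠ ⊥) (hhb : ∀ p, h p ≠ ⊥) :
    LowerSemicontinuous fun p => g p + h p :=
  hg.add' hh fun p => EReal.continuousAt_add (Or.inr (hhb p)) (Or.inl (hgb p))

lemma LowerSemicontinuous.coe_mul {g : α → EReal} (hg : LowerSemicontinuous g) {c : ℝ}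
    (hc : 0 ≤ c) : LowerSemicontinuous fun p => (c : EReal) * g p := by
  rcases hc.eq_or_lt with rfl | hc
  · simpa only [EReal.coe_zero, zero_mul] using lowerSemicontinuous_const
  have hc0 : (c : EReal) ≠ 0 := by exact_mod_cast hc.ne'
  have hcont : Continuous fun a : EReal => (c : EReal) * a :=
    continuous_iff_continuousAt.2 fun a =>
      (EReal.continuousAt_mul (p := ((c : EReal), a)) (Or.inl hc0) (Or.inl hc0)
        (Or.inl (EReal.coe_ne_bot c))
        (Or.inl (EReal.coe_ne_top c))).comp (continuous_const.prodMk continuous_id).continuousAt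
  exact hcont.comp_lowerSemicontinuous hg fun a b hab =>
    mul_le_mul_of_nonneg_left hab (EReal.coe_nonneg.2 hc.le)

lemma LowerSemicontinuous.exists_forall_le_of_isCompact_sublevel {g : α → EReal}
    (hg : LowerSemicontinuous g) {a : EReal} (hK : IsCompact {p | g p ≤ a})
    (hne : ∃ p, g p ≤ a) : ∃ p, ∀ q, g p ≤ g q := by
  obtain ⟨p, hp, hmin⟩ := (hg.lowerSemicontinuousOn _).exists_isMinOn hne hK
  exact ⟨p, fun q => (le_or_gt (g q) a).elim (fun hq => hmin hq) fun hq => le_trans hp hq.le⟩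

lemma LowerSemicontinuous.iInf_ne_bot_of_isCompact_sublevel {g : α → EReal}
    (hg : LowerSemicontinuous g) (hgb : ∀ p, g p ≠ ⊥) {a : EReal} (ha : a ≠ ⊥)
    (hK : IsCompact {p | g p ≤ a}) : ⨅ p, g p ≠ ⊥ := by
  by_cases hne : ∃ p, g p ≤ a
  · obtain ⟨p, hp⟩ := hg.exists_forall_le_of_isCompact_sublevel hK hne
    exact ne_bot_of_le_ne_bot (hgb p) (le_iInf hp)
  · push Not at hne
    exact ne_bot_of_le_ne_bot ha (le_iInf fun p => (hne p).le)

/-- On `K \ V`, for a neighbourhood `V` of `a`, the function `g` has a positive minimum. -/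
lemma tendsto_of_isCompact_of_lowerSemicontinuous {ι : Type*} {l : Filter ι} {g : α → EReal}
    (hg : LowerSemicontinuous g) {K : Set α} (hK : IsCompact K) {a : α}
    (hpos : ∀ p ∈ K, p ≠ a → 0 < g p) {u : ι → α} (huK : ∀ᶠ i in l, u i ∈ K)
    (hgu : Tendsto (fun i => g (u i)) l (𝓝 0)) : Tendsto u l (𝓝 a) := by
  refine tendsto_nhds.2 fun V hV haV => ?_
  rcases (K \ V).eq_empty_or_nonempty with hempty | hne
  · filter_upwards [huK] with i hi
    by_contra hiV
    exact hempty.subset ⟨hi, hiV⟩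
  obtain ⟨p, ⟨hpK, hpV⟩, hmin⟩ := (hg.lowerSemicontinuousOn _).exists_isMinOn hne (hK.diff hV)
  have hp : 0 < g p := hpos p hpK fun h => hpV (h ▸ haV)
  filter_upwards [huK, hgu.eventually (gt_mem_nhds hp)] with i hiK hi
  by_contra hiV
  exact (hi.trans_le (hmin ⟨hiK, hiV⟩)).false

end Semicontinuity

lemma EReal.iInf_add_of_ne_bot {ι : Sort*} (g : ι → EReal) {s : EReal}
    (hg : ⨅ i, g i ≠ ⊥) (hs : s ≠ ⊥) : (⨅ i, g i) + s = ⨅ i, (g i + s) := by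
  refine le_antisymm (le_iInf fun i => add_le_add_left (iInf_le _ i) _) ?_
  induction s using EReal.rec with
  | bot => exact absurd rfl hs
  | top => rw [EReal.add_top_of_ne_bot hg]; exact le_top
  | coe s =>
    refine (EReal.sub_le_iff_le_add (Or.inl (EReal.coe_ne_bot s))
      (Or.inl (EReal.coe_ne_top s))).1 ?_
    exact le_iInf fun i => EReal.sub_le_of_le_add (iInf_le _ i)

lemma wCompact_closedBall {H : Type*} [NormedAddCommGroup H] [InnerProductSpace ℝ H]
    [CompleteSpace H] (R : ℝ) : WCompact (Metric.closedBall (0 : H) R) := by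
  let e := (InnerProductSpace.toDual ℝ H).symm
  let T : WeakDual ℝ H → WeakSpace ℝ H := fun φ => e (WeakDual.toStrongDual φ)
  have hT : Continuous T := by
    refine WeakBilin.continuous_of_continuous_eval _ fun L => ?_
    have hL : ∀ ψ : StrongDual ℝ H, L (e ψ) = ψ (e L) := fun ψ => by
      rw [← InnerProductSpace.toDual_symm_apply (𝕜 := ℝ) (y := ψ), real_inner_comm]
      exact (InnerProductSpace.toDual_symm_apply (𝕜 := ℝ)).symm
    exact (WeakDual.eval_continuous (𝕜 := ℝ) (e L)).congr fun φ => (hL φ).symm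
  have hball : e '' Metric.closedBall 0 R = Metric.closedBall 0 R := by
    rw [e.image_closedBall, map_zero]
  exact hball ▸ (WeakDual.isCompact_closedBall (0 : StrongDual ℝ H) R).image hT

lemma wSeqConv_of_tendsto {X : Type*} [NormedAddCommGroup X] [NormedSpace ℝ X] {u : ℕ → X}
    {l : X} (h : Tendsto (show ℕ → WeakSpace ℝ X from u) atTop (𝓝 (show WeakSpace ℝ X from l))) :
    WSeqConv u l :=
  fun L => ((WeakBilin.eval_continuous (topDualPairing ℝ X).flip L).tendsto _).comp h

lemma WLevelCompact.exists_wCompact_subset {X H : Type*} [NormedAddCommGroup X]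
    [NormedSpace ℝ X] [NormedAddCommGroup H] [NormedSpace ℝ H] {f : X → H → EReal}
    (hf : WLevelCompact f) {C : Set H} (hC : WCompact C) (α : ℝ) :
    ∃ B : Set X, WCompact B ∧ ∀ z ∈ C, {x | f x z ≤ (α : EReal)} ⊆ B := by
  choose U hU hzU B hB hsub using fun z => hf z α
  obtain ⟨t, -, ht, hCt⟩ := IsCompact.elim_finite_subcover_image (X := WeakSpace ℝ H) hC
    (b := C) (c := U) (fun z _ => hU z) fun z hz => Set.mem_biUnion hz (hzU z)
  refine ⟨⋃ i ∈ t, B i, ht.isCompact_biUnion fun i _ => hB i, fun z hz x hx => ?_⟩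
  obtain ⟨i, hi, hzi⟩ := Set.mem_iUnion₂.1 (hCt hz)
  exact Set.mem_biUnion hi (hsub i z hzi hx)

section AugmentedLagrangian

variable {X H : Type*} [NormedAddCommGroup H] [InnerProductSpace ℝ H] {f : X → H → EReal}
  {σ : H → EReal} {A : H → H} {y : H} {x : X} {z : H}

lemma lagr_eq_add_mul {c d : ℝ} (hc : 0 ≤ c) (hcd : c ≤ d) :
    lagr f σ A y d x z = lagr f σ A y c x z + ((d - c : ℝ) : EReal) * σ z := by
  rw [lagr, lagr, add_assoc, ← EReal.right_distrib_of_nonneg (EReal.coe_nonneg.2 hc)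
    (EReal.coe_nonneg.2 (sub_nonneg.2 hcd)), ← EReal.coe_add, add_sub_cancel]

lemma sigma_le_of_lagr_le {c d q m : ℝ} (hc : 0 ≤ c) (hcd : c < d)
    (hq : (q : EReal) ≤ dualq f σ A y c) (hle : lagr f σ A y d x z ≤ m) :
    σ z ≤ ((m - q) / (d - c) : ℝ) := by
  have hsum : (q : EReal) + ((d - c : ℝ) : EReal) * σ z ≤ m :=
    calc (q : EReal) + ((d - c : ℝ) : EReal) * σ z
        ≤ lagr f σ A y c x z + ((d - c : ℝ) : EReal) * σ z :=
          add_le_add_left (hq.trans (iInf₂_le x z)) _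
      _ = lagr f σ A y d x z := (lagr_eq_add_mul hc hcd.le).symm
      _ ≤ m := hle
  rw [EReal.coe_div, EReal.le_div_iff_mul_le (by exact_mod_cast sub_pos.2 hcd)
    (EReal.coe_ne_top _), mul_comm, EReal.coe_sub m q,
    EReal.le_sub_iff_add_le (Or.inl (EReal.coe_ne_bot q)) (Or.inl (EReal.coe_ne_top q)),
    add_comm]
  exact hsum

lemma f_le_of_lagr_le {c m K : ℝ} (hA : (‖A z‖ : EReal) ≤ σ z) (hσ : 0 ≤ σ z) (hc : 0 ≤ c)
    (hle : lagr f σ A y c x z ≤ m) (hK : σ z ≤ K) : f x z ≤ ((m + K * ‖y‖ : ℝ) : EReal) := by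
  have hsub : f x z - ((inner ℝ (A z) y : ℝ) : EReal) ≤ m :=
    (le_add_of_nonneg_right (mul_nonneg (EReal.coe_nonneg.2 hc) hσ)).trans hle
  have hinner : inner ℝ (A z) y ≤ K * ‖y‖ :=
    (real_inner_le_norm _ _).trans
      (mul_le_mul_of_nonneg_right (by exact_mod_cast hA.trans hK) (norm_nonneg _))
  calc f x z ≤ (m : EReal) + ((inner ℝ (A z) y : ℝ) : EReal) :=
        (EReal.sub_le_iff_le_add (Or.inl (EReal.coe_ne_bot _))
          (Or.inl (EReal.coe_ne_top _))).1 hsub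
    _ = ((m + inner ℝ (A z) y : ℝ) : EReal) := (EReal.coe_add _ _).symm
    _ ≤ ((m + K * ‖y‖ : ℝ) : EReal) := EReal.coe_le_coe_iff.2 (by linarith)

lemma gam_eq_iInf_lagr (n : ℕ) (hβ : ⨅ x, f x z ≠ ⊥) (hσ : 0 ≤ σ z) :
    gam f σ A y n z = ⨅ x, lagr f σ A y n x z := by
  have hnσ : (n : EReal) * σ z ≠ ⊥ :=
    ne_bot_of_le_ne_bot EReal.zero_ne_bot (mul_nonneg (by exact_mod_cast n.zero_le) hσ)
  have hβr : ⨅ x, (f x z + ((-inner ℝ (A z) y : ℝ) : EReal)) ≠ ⊥ := by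
    rw [← EReal.iInf_add_of_ne_bot _ hβ (EReal.coe_ne_bot _)]
    exact EReal.add_ne_bot_iff.2 ⟨hβ, EReal.coe_ne_bot _⟩
  simp only [gam, lagr, sub_eq_add_neg, ← EReal.coe_neg, EReal.coe_coe_eq_natCast]
  rw [EReal.iInf_add_of_ne_bot _ hβ (EReal.coe_ne_bot _), EReal.iInf_add_of_ne_bot _ hβr hnσ]

lemma gam_eq_iInf_of_forall_lagr_le {n : ℕ} (hβ : ∀ z, ⨅ x, f x z ≠ ⊥) (hσ : ∀ z, 0 ≤ σ z)
    (hmin : ∀ x' z', lagr f σ A y n x z ≤ lagr f σ A y n x' z') :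
    gam f σ A y n z = ⨅ z', gam f σ A y n z' := by
  simp only [gam_eq_iInf_lagr n (hβ _) (hσ _)]
  exact le_antisymm (le_iInf fun z' => le_iInf fun x' => (iInf_le _ x).trans (hmin x' z'))
    (iInf_le _ z)

end AugmentedLagrangian

section WeakTopology

variable {X H : Type*} [NormedAddCommGroup X] [NormedSpace ℝ X] [NormedAddCommGroup H]
  [InnerProductSpace ℝ H] {f : X → H → EReal} {σ : H → EReal} {A : H → H} {y : H}

lemma iInf_ne_bot_of_wLevelCompact (hflsc : WLsc2 fun p : X × H => f p.1 p.2)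
    (hflev : WLevelCompact f) (hfb : ∀ x z, f x z ≠ ⊥) (z : H) : ⨅ x, f x z ≠ ⊥ := by
  obtain ⟨U, -, hzU, B, hB, hsub⟩ := hflev z 0
  have hlsc : LowerSemicontinuous fun x : WeakSpace ℝ X => f x z :=
    hflsc.comp (continuous_id.prodMk continuous_const : Continuous
      fun x : WeakSpace ℝ X => ((x, z) : WeakSpace ℝ X × WeakSpace ℝ H))
  exact hlsc.iInf_ne_bot_of_isCompact_sublevel (fun x => hfb x z) (EReal.coe_ne_bot 0)
    (hB.of_isClosed_subset (hlsc.isClosed_preimage _) (hsub z hzU))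

lemma lowerSemicontinuous_lagr (hflsc : WLsc2 fun p : X × H => f p.1 p.2)
    (hfb : ∀ x z, f x z ≠ ⊥) (hσlsc : WLsc σ) (hσ : ∀ z, 0 ≤ σ z)
    (hA : WUsc fun z => inner ℝ (A z) y) {c : ℝ} (hc : 0 ≤ c) :
    LowerSemicontinuous fun p : WeakSpace ℝ X × WeakSpace ℝ H => lagr f σ A y c p.1 p.2 := by
  have hinner : LowerSemicontinuous
      fun p : WeakSpace ℝ X × WeakSpace ℝ H => ((-inner ℝ (A p.2) y : ℝ) : EReal) :=
    (continuous_coe_real_ereal.comp continuous_neg).comp_upperSemicontinuous_antitone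
      (hA.comp continuous_snd) fun a b hab => EReal.coe_le_coe_iff.2 (neg_le_neg hab)
  have hpen : LowerSemicontinuous
      fun p : WeakSpace ℝ X × WeakSpace ℝ H => (c : EReal) * σ p.2 :=
    (hσlsc.comp continuous_snd).coe_mul hc
  simp only [lagr, sub_eq_add_neg, ← EReal.coe_neg]
  exact (hflsc.add_of_ne_bot hinner (fun p => hfb p.1 p.2) fun _ => EReal.coe_ne_bot _)
    |>.add_of_ne_bot hpen (fun p => EReal.add_ne_bot_iff.2 ⟨hfb p.1 p.2, EReal.coe_ne_bot _⟩)
      fun p => ne_bot_of_le_ne_bot EReal.zero_ne_bot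
        (mul_nonneg (EReal.coe_nonneg.2 hc) (hσ p.2))

/-- The sublevel set `{L_d ≤ m}` of the Lagrangian is weakly compact: on it `q ≤ q(y, c)` forces
`σ z ≤ (m - q) / (d - c) ≤ K`, so `z ∈ C`, and then `f x z ≤ m + K ‖y‖` confines `x`. -/
lemma exists_forall_lagr_le (hflsc : WLsc2 fun p : X × H => f p.1 p.2)
    (hflev : WLevelCompact f) (hfb : ∀ x z, f x z ≠ ⊥) (hσlsc : WLsc σ) (hσ : ∀ z, 0 ≤ σ z)
    (hA0 : ∀ z, (‖A z‖ : EReal) ≤ σ z) (hA1 : WUsc fun z => inner ℝ (A z) y)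
    {c d q m K : ℝ} (hc : 0 ≤ c) (hcd : c < d) (hq : (q : EReal) ≤ dualq f σ A y c)
    (hK : (m - q) / (d - c) ≤ K) {C : Set H} (hC : WCompact C) (hCK : {z | σ z ≤ K} ⊆ C)
    {x₀ : X} {z₀ : H} (h₀ : lagr f σ A y d x₀ z₀ ≤ m) :
    ∃ x v, (∀ x' z', lagr f σ A y d x v ≤ lagr f σ A y d x' z') ∧
      σ v ≤ ((m - q) / (d - c) : ℝ) := by
  obtain ⟨B, hB, hBsub⟩ := hflev.exists_wCompact_subset hC (m + K * ‖y‖)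
  have hlsc := lowerSemicontinuous_lagr hflsc hfb hσlsc hσ hA1 (hc.trans hcd.le)
  set T := {p : WeakSpace ℝ X × WeakSpace ℝ H | lagr f σ A y d p.1 p.2 ≤ m}
  have hσT : ∀ p ∈ T, σ p.2 ≤ ((m - q) / (d - c) : ℝ) := fun p hp =>
    sigma_le_of_lagr_le (x := show X from p.1) (z := show H from p.2) hc hcd hq hp
  have hTsub : T ⊆ (show Set (WeakSpace ℝ X) from B) ×ˢ (show Set (WeakSpace ℝ H) from C) :=
    fun p hp =>
      have hσK : σ p.2 ≤ K := (hσT p hp).trans (EReal.coe_le_coe_iff.2 hK)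
      ⟨hBsub p.2 (hCK hσK) (f_le_of_lagr_le (x := show X from p.1) (z := show H from p.2)
        (hA0 _) (hσ _) (hc.trans hcd.le) hp hσK), hCK hσK⟩
  obtain ⟨⟨x, v⟩, hmin⟩ := hlsc.exists_forall_le_of_isCompact_sublevel
    ((hB.prod hC).of_isClosed_subset (hlsc.isClosed_preimage _) hTsub) ⟨(x₀, z₀), h₀⟩
  exact ⟨x, v, fun x' z' => hmin (x', z'), hσT _ ((hmin (x₀, z₀)).trans h₀)⟩

end WeakTopology

theorem lagrangian_approximation_minimizers_general
    {X H : Type*} [NormedAddCommGroup X] [NormedSpace ℝ X]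
    [NormedAddCommGroup H] [InnerProductSpace ℝ H] [CompleteSpace H]
    (φ : X → EReal)
    (hφproper : (∀ x, φ x ≠ ⊥) ∧ (∃ x, φ x ≠ ⊤))
    (f : X → H → EReal)
    (hdual : ∀ x, f x 0 = φ x)
    (hfproper : (∀ x z, f x z ≠ ⊥) ∧ (∃ x z, f x z ≠ ⊤))
    (hflsc : WLsc2 fun p : X × H => f p.1 p.2)
    (hflev : WLevelCompact f)
    (σ : H → EReal)
    (hσpos : ∀ z, 0 ≤ σ z)
    (hσ0 : σ 0 = 0)
    (hσargmin : ∀ z, σ z = 0 → z = 0)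
    (hσwlsc : WLsc σ)
    (A : H → H)
    (hA0 : ∀ z, (‖A z‖ : EReal) ≤ σ z)
    (hA1 : ∀ y : H, WUsc fun z => (inner ℝ (A z) y : ℝ))
    (Kσ : ℝ) (hKσpos : 0 < Kσ) (hσcc : IsBounded {z : H | σ z ≤ (Kσ : EReal)})
    (ybar : H) (cbar : ℝ) (hcbar : 0 ≤ cbar) (hqbar : dualq f σ A ybar cbar ≠ ⊥) :
    ∃ (n₀ : ℕ) (v : ℕ → H),
      (∀ n, n₀ ≤ n → gam f σ A ybar n (v n) = ⨅ z : H, gam f σ A ybar n z) ∧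
      (∃ M : ℝ, ∀ n, ‖v n‖ ≤ M) ∧ WSeqConv v 0 := by
  obtain ⟨x₀, hx₀⟩ := hφproper.2
  have hA00 : A 0 = 0 := norm_le_zero_iff.1 (by exact_mod_cast hσ0 ▸ hA0 0)
  set m := (φ x₀).toReal
  have hlagr₀ : ∀ c : ℝ, lagr f σ A ybar c x₀ 0 = m := fun c => by
    simp [lagr, hA00, hσ0, hdual, m, EReal.coe_toReal hx₀ (hφproper.1 x₀)]
  set q := (dualq f σ A ybar cbar).toReal
  have hq : (q : EReal) ≤ dualq f σ A ybar cbar :=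
    (EReal.coe_toReal (ne_top_of_le_ne_top (EReal.coe_ne_top m)
      ((iInf₂_le x₀ 0).trans (hlagr₀ cbar).le)) hqbar).le
  set ε : ℕ → ℝ := fun n => (m - q) / (n - cbar)
  have hε : Tendsto ε atTop (𝓝 0) := tendsto_const_nhds.div_atTop
    (tendsto_atTop_add_const_right _ _ tendsto_natCast_atTop_atTop)
  obtain ⟨n₀, hn₀⟩ := eventually_atTop.1
    ((tendsto_natCast_atTop_atTop.eventually_gt_atTop cbar).and (hε.eventually_le_const hKσpos))
  obtain ⟨R, hR⟩ := hσcc.subset_closedBall 0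
  have hβ := iInf_ne_bot_of_wLevelCompact hflsc hflev hfproper.1
  have hmin : ∀ n, ∃ v, (n₀ ≤ n → gam f σ A ybar n v = ⨅ z, gam f σ A ybar n z ∧
      σ v ≤ ε n) ∧ σ v ≤ Kσ := by
    intro n
    by_cases hn : n₀ ≤ n
    · obtain ⟨x, v, hxv, hσv⟩ := exists_forall_lagr_le hflsc hflev hfproper.1 hσwlsc hσpos hA0
        (hA1 ybar) hcbar (hn₀ n hn).1 hq (hn₀ n hn).2 (wCompact_closedBall R) hR (hlagr₀ n).le
      exact ⟨v, fun _ => ⟨gam_eq_iInf_of_forall_lagr_le hβ hσpos hxv, hσv⟩,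
        hσv.trans (EReal.coe_le_coe_iff.2 (hn₀ n hn).2)⟩
    · exact ⟨0, fun h => absurd h hn, hσ0 ▸ EReal.coe_nonneg.2 hKσpos.le⟩
  choose v hv using hmin
  have hvR : ∀ n, v n ∈ Metric.closedBall (0 : H) R := fun n => hR (hv n).2
  refine ⟨n₀, v, fun n hn => ((hv n).1 hn).1, ⟨R, fun n => mem_closedBall_zero_iff.1 (hvR n)⟩, ?_⟩
  have hσv : Tendsto (fun n => σ (v n)) atTop (𝓝 0) :=
    tendsto_of_tendsto_of_tendsto_of_le_of_le' tendsto_const_nhds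
      (by simpa using EReal.tendsto_coe.2 hε)
      (Eventually.of_forall fun n => hσpos _)
      (eventually_atTop.2 ⟨n₀, fun n hn => ((hv n).1 hn).2⟩)
  exact wSeqConv_of_tendsto (tendsto_of_isCompact_of_lowerSemicontinuous hσwlsc
    (wCompact_closedBall R) (fun z _ hz => (hσpos z).lt_of_ne' (mt (hσargmin z) hz))
    (Eventually.of_forall hvR) hσv)

/-- Properties of the Lagrangian approximation `γ_n`: minimizers `v_n`
exist for large `n`, and the sequence `(v_n)` is bounded and converges weakly to `0`. -/
theorem lagrangian_approximation_minimizers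
    {X H : Type*} [NormedAddCommGroup X] [NormedSpace ℝ X] [CompleteSpace X]
    [NormedAddCommGroup H] [InnerProductSpace ℝ H] [CompleteSpace H]
    (hrefl : IsReflexiveSpace X)
    (φ : X → EReal)
    (hφproper : (∀ x, φ x ≠ ⊥) ∧ (∃ x, φ x ≠ ⊤))
    (hφwlsc : WLsc φ)
    (hφlev : ∀ α : ℝ, WCompact {x : X | φ x ≤ (α : EReal)})
    (f : X → H → EReal)
    (hdual : ∀ x, f x 0 = φ x)
    (hfproper : (∀ x z, f x z ≠ ⊥) ∧ (∃ x z, f x z ≠ ⊤))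
    (hflsc : WLsc2 fun p : X × H => f p.1 p.2)
    (hflev : WLevelCompact f)
    (σ : H → EReal)
    (hσpos : ∀ z, 0 ≤ σ z)
    (hσ0 : σ 0 = 0)
    (hσargmin : ∀ z, σ z = 0 → z = 0)
    (hσwlsc : WLsc σ)
    (A : H → H)
    (hA0 : ∀ z, (‖A z‖ : EReal) ≤ σ z)
    (hA1 : ∀ y : H, WUsc fun z => (inner ℝ (A z) y : ℝ))
    (Kσ : ℝ) (hKσpos : 0 < Kσ) (hσcc : IsBounded {z : H | σ z ≤ (Kσ : EReal)})
    (ybar : H) (cbar : ℝ) (hcbar : 0 ≤ cbar) (hqbar : dualq f σ A ybar cbar ≠ ⊥) :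
    ∃ (n₀ : ℕ) (v : ℕ → H),
      (∀ n, n₀ ≤ n → gam f σ A ybar n (v n) = ⨅ z : H, gam f σ A ybar n z) ∧
      (∃ M : ℝ, ∀ n, ‖v n‖ ≤ M) ∧ WSeqConv v 0 :=
  lagrangian_approximation_minimizers_general φ hφproper f hdual hfproper hflsc hflev σ hσpos hσ0
    hσargmin hσwlsc A hA0 hA1 Kσ hKσpos hσcc ybar cbar hcbar hqbar
end
end

section
/- Assume (H0)–(H2), (A0), (A1). Let (ŷ,ĉ) ∈ H × ℝ₊ satisfy q(ŷ,ĉ) > −∞, and set T := {(w,c) ∈ H × ℝ₊ : c > ĉ + ‖w − ŷ‖}. Then: (iiA) q(w,c) > −∞ for every (w,c) ∈ T (i.e. T ⊆ dom q); and (iiB) if (ŷ,ĉ) is a dual solution then every (w,c) ∈ T is a dual solution. -/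
open Filter Topology Bornology

noncomputable section

/-! By Cauchy–Schwarz and (A0), `⟨A z, w − ŷ⟩ ≤ σ(z) ‖w − ŷ‖ ≤ (c − ĉ) σ(z)`, so the integrand
`f(x,z) − ⟨A z, y⟩ + c σ(z)` of `q` only grows when `(ŷ,ĉ)` moves to `(w,c)` in the cone. Hence `q` is
monotone along the cone. -/

open RealInnerProductSpace

theorem neg_inner_add_mul_le_of_norm_le {H : Type*} [NormedAddCommGroup H]
    [InnerProductSpace ℝ H] {a y w : H} {s : EReal} {ch c : ℝ} (hs : (‖a‖ : EReal) ≤ s)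
    (hc : 0 < c) (hle : ch + ‖w - y‖ ≤ c) :
    -((⟪a, y⟫ : ℝ) : EReal) + ch * s ≤ -((⟪a, w⟫ : ℝ) : EReal) + c * s := by
  rcases eq_or_ne s ⊤ with rfl | hs_top
  · rw [EReal.coe_mul_top_of_pos hc, EReal.add_top_of_ne_bot (by simp)]
    exact le_top
  · lift s to ℝ using ⟨hs_top, ne_bot_of_le_ne_bot (EReal.coe_ne_bot _) hs⟩
    have hs : ‖a‖ ≤ s := EReal.coe_le_coe_iff.mp hs
    have hcs : ⟪a, w⟫ - ⟪a, y⟫ ≤ ‖a‖ * ‖w - y‖ := by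
      rw [← inner_sub_right]
      exact real_inner_le_norm a (w - y)
    have key : -⟪a, y⟫ + ch * s ≤ -⟪a, w⟫ + c * s := by
      nlinarith [norm_nonneg a, norm_nonneg (w - y)]
    exact_mod_cast key

section Lagrangian

variable {X H : Type*} [NormedAddCommGroup H] [InnerProductSpace ℝ H]
  {f : X → H → EReal} {σ : H → EReal} {A : H → H} {y w : H} {ch c : ℝ}

theorem lagr_le_lagr (hA0 : ∀ z, (‖A z‖ : EReal) ≤ σ z) (hc : 0 < c)
    (hle : ch + ‖w - y‖ ≤ c) (x : X) (z : H) :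
    lagr f σ A y ch x z ≤ lagr f σ A w c x z := by
  simp only [lagr, sub_eq_add_neg, add_assoc]
  exact add_le_add le_rfl (neg_inner_add_mul_le_of_norm_le (hA0 z) hc hle)

theorem dualq_le_dualq (hA0 : ∀ z, (‖A z‖ : EReal) ≤ σ z) (hc : 0 < c)
    (hle : ch + ‖w - y‖ ≤ c) : dualq f σ A y ch ≤ dualq f σ A w c :=
  iInf_mono fun x => iInf_mono fun z => lagr_le_lagr hA0 hc hle x z

end Lagrangian

theorem dual_domain_and_solution_cone_general
    {X H : Type*}
    [NormedAddCommGroup H] [InnerProductSpace ℝ H]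
    (f : X → H → EReal)
    (σ : H → EReal)
    (A : H → H)
    (hA0 : ∀ z, (‖A z‖ : EReal) ≤ σ z)
    (yh : H) (ch : ℝ) (hch : 0 ≤ ch) (hqh : dualq f σ A yh ch ≠ ⊥) :
    (∀ (w : H) (c : ℝ), 0 ≤ c → ch + ‖w - yh‖ < c → dualq f σ A w c ≠ ⊥) ∧
      (DualSol f σ A yh ch →
        ∀ (w : H) (c : ℝ), 0 ≤ c → ch + ‖w - yh‖ < c → DualSol f σ A w c) := by
  have hmono : ∀ (w : H) (c : ℝ), ch + ‖w - yh‖ < c →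
      dualq f σ A yh ch ≤ dualq f σ A w c := fun w c hlt =>
    dualq_le_dualq hA0 (by linarith [norm_nonneg (w - yh)]) hlt.le
  refine ⟨fun w c _ hlt => ne_bot_of_le_ne_bot hqh (hmono w c hlt), ?_⟩
  intro hsol w c hc hlt
  exact ⟨hc, fun y' c' hc' => (hsol.2 y' c' hc').trans (hmono w c hlt)⟩

/-- If `q(ŷ,ĉ) > −∞` then every `(w,c)` with `c > ĉ + ‖w − ŷ‖` is in the
domain of `q`; and if `(ŷ,ĉ)` is a dual solution then every such `(w,c)` is a dual
solution as well. -/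
theorem dual_domain_and_solution_cone
    {X H : Type*} [NormedAddCommGroup X] [NormedSpace ℝ X] [CompleteSpace X]
    [NormedAddCommGroup H] [InnerProductSpace ℝ H] [CompleteSpace H]
    (hrefl : IsReflexiveSpace X)
    (φ : X → EReal)
    (hφproper : (∀ x, φ x ≠ ⊥) ∧ (∃ x, φ x ≠ ⊤))
    (hφwlsc : WLsc φ)
    (hφlev : ∀ α : ℝ, WCompact {x : X | φ x ≤ (α : EReal)})
    (f : X → H → EReal)
    (hdual : ∀ x, f x 0 = φ x)
    (hfproper : (∀ x z, f x z ≠ ⊥) ∧ (∃ x z, f x z ≠ ⊤))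
    (hflsc : WLsc2 fun p : X × H => f p.1 p.2)
    (hflev : WLevelCompact f)
    (σ : H → EReal)
    (hσpos : ∀ z, 0 ≤ σ z)
    (hσ0 : σ 0 = 0)
    (hσargmin : ∀ z, σ z = 0 → z = 0)
    (hσwlsc : WLsc σ)
    (A : H → H)
    (hA0 : ∀ z, (‖A z‖ : EReal) ≤ σ z)
    (hA1 : ∀ y : H, WUsc fun z => (inner ℝ (A z) y : ℝ))
    (yh : H) (ch : ℝ) (hch : 0 ≤ ch) (hqh : dualq f σ A yh ch ≠ ⊥) :
    (∀ (w : H) (c : ℝ), 0 ≤ c → ch + ‖w - yh‖ < c → dualq f σ A w c ≠ ⊥) ∧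
      (DualSol f σ A yh ch →
        ∀ (w : H) (c : ℝ), 0 ≤ c → ch + ‖w - yh‖ < c → DualSol f σ A w c) :=
  dual_domain_and_solution_cone_general f σ A hA0 yh ch hch hqh
end
end

section
/- Assume (H0)–(H2), (A0), (A1), strong duality M_P = M_D, and that σ is conditionally coercive with constant K_σ. Let (ŷ,ĉ) ∈ H × ℝ₊ satisfy q(ŷ,ĉ) > −∞ and let s ≥ M_P. Define Φ_{(w,c)}(x,z) := f(x,z) − ⟨A(z),w⟩ + c σ(z) and T̃(s) := {(w,c) ∈ H × ℝ₊ : c > ĉ + (s − q(ŷ,ĉ))/K_σ + ‖w − ŷ‖}. Then for every (w,c) ∈ T̃(s) the level set {(x,z) ∈ X × H : Φ_{(w,c)}(x,z) ≤ s} is nonempty and weakly compact, and there exists (x̃,z̃) ∈ X × H such that q(w,c) = f(x̃,z̃) − ⟨A(z̃),w⟩ + c σ(z̃), i.e. the infimum defining q(w,c) is attained. -/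
open Filter Topology Bornology

noncomputable section

/-!
On the level set `{Φ_{(w,c)} ≤ t}`, comparing `Φ_{(w,c)}` with `Φ_{(ŷ,ĉ)} ≥ q(ŷ,ĉ)` and using
`⟨A z, w - ŷ⟩ ≤ σ(z) ‖w - ŷ‖` gives `(c - ĉ - ‖w - ŷ‖) σ(z) ≤ t - q(ŷ,ĉ)`; the inequality
defining `T̃` therefore forces `σ(z) ≤ K_σ`, and then `f(x,z) ≤ t + K_σ ‖w‖`. So `z` lies in a
bounded weakly closed, hence weakly compact, subset of the Hilbert space, and weak
level-compactness of `f` with a finite subcover confines `x` to a weakly compact set. As the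
inequality defining `T̃(s)` is strict, this also works at some level `s' > s`, where the weakly
lsc `Φ_{(w,c)}` attains its infimum `q(w,c) ≤ M_D = M_P ≤ s < s'`; the minimizer also lies in
the level set at `s`.
-/

theorem InnerProductSpace.isReflexiveSpace (H : Type*) [NormedAddCommGroup H]
    [InnerProductSpace ℝ H] [CompleteSpace H] : IsReflexiveSpace H := by
  intro Φ
  set e := InnerProductSpace.toDual ℝ H
  refine ⟨e.symm (Φ.comp e.toContinuousLinearEquiv.toContinuousLinearMap), ?_⟩
  ext l
  calc l (e.symm _) = inner ℝ (e.symm l) (e.symm _) := InnerProductSpace.toDual_symm_apply.symm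
    _ = inner ℝ (e.symm _) (e.symm l) := real_inner_comm _ _
    _ = Φ l := by rw [InnerProductSpace.toDual_symm_apply]; simp [e]

theorem IsReflexiveSpace.wCompact_of_isBounded_of_isClosed {X : Type*} [NormedAddCommGroup X]
    [NormedSpace ℝ X] (hX : IsReflexiveSpace X) {S : Set X} (hb : IsBounded S)
    (hc : IsClosed (show Set (WeakSpace ℝ X) from S)) : WCompact S := by
  have hrange : Set.range (NormedSpace.inclusionInDoubleDualWeak ℝ X) = Set.univ :=
    Set.range_eq_univ.2 fun φ => (hX (WeakDual.toStrongDual φ)).imp fun x hx =>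
      DFunLike.ext _ _ fun l => DFunLike.congr_fun hx l
  have := NormedSpace.isCompact_closure_of_isBounded ℝ X S hb (by simp [hrange])
  rwa [hc.closure_eq] at this

theorem EReal.continuous_coe_mul {c : ℝ} (hc : 0 < c) :
    Continuous fun t : EReal => (c : EReal) * t :=
  continuous_iff_continuousAt.2 fun t =>
    (EReal.continuousAt_mul (p := ((c : EReal), t)) (.inl (by simpa using hc.ne'))
      (.inl (by simpa using hc.ne')) (.inl (EReal.coe_ne_bot c)) (.inl (EReal.coe_ne_top c))).comp
      (continuous_const.prodMk continuous_id).continuousAt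

theorem LowerSemicontinuous.sub_coe_add_coe_mul {γ : Type*} [TopologicalSpace γ]
    {F S : γ → EReal} {a : γ → ℝ} {c : ℝ} (hF : LowerSemicontinuous F) (hF_ne_bot : ∀ p, F p ≠ ⊥)
    (ha : UpperSemicontinuous a) (hS : LowerSemicontinuous S) (hS_nonneg : ∀ p, 0 ≤ S p)
    (hc : 0 < c) : LowerSemicontinuous fun p => F p - (a p : EReal) + c * S p := by
  have hneg_a : LowerSemicontinuous fun p => ((-a p : ℝ) : EReal) :=
    (continuous_coe_real_ereal.comp continuous_neg).comp_upperSemicontinuous_antitone ha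
      fun _ _ h => EReal.coe_le_coe_iff.2 (neg_le_neg h)
  have hcS : LowerSemicontinuous fun p => (c : EReal) * S p :=
    (EReal.continuous_coe_mul hc).comp_lowerSemicontinuous hS
      fun _ _ h => mul_le_mul_of_nonneg_left h (EReal.coe_nonneg.2 hc.le)
  simp_rw [sub_eq_add_neg, ← EReal.coe_neg]
  have hFa_ne_bot (p : γ) : F p + ((-a p : ℝ) : EReal) ≠ ⊥ := by
    simp [EReal.add_eq_bot_iff, hF_ne_bot p]
  have hcS_ne_bot (p : γ) : (c : EReal) * S p ≠ ⊥ :=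
    ne_bot_of_le_ne_bot (by simp) (EReal.mul_nonneg (EReal.coe_nonneg.2 hc.le) (hS_nonneg p))
  refine (hF.add' hneg_a fun p => ?_).add' hcS fun p => ?_
  · exact EReal.continuousAt_add (.inr (EReal.coe_ne_bot _)) (.inl (hF_ne_bot p))
  · exact EReal.continuousAt_add (.inr (hcS_ne_bot p)) (.inl (hFa_ne_bot p))

theorem LowerSemicontinuous.exists_eq_iInf_of_isCompact_sublevel {α β : Type*}
    [TopologicalSpace α] [CompleteLinearOrder β] {g : α → β} (hg : LowerSemicontinuous g)
    {t : β} (ht : IsCompact {a | g a ≤ t}) (hlt : ⨅ a, g a < t) : ∃ a, g a = ⨅ a, g a := by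
  obtain ⟨a₀, ha₀⟩ := iInf_lt_iff.1 hlt
  obtain ⟨m, hm, hmin⟩ := (hg.lowerSemicontinuousOn _).exists_isMinOn ⟨a₀, ha₀.le⟩ ht
  refine ⟨m, le_antisymm (le_iInf fun a => ?_) (iInf_le g m)⟩
  by_cases ha : g a ≤ t
  · exact hmin ha
  · exact hm.trans (not_le.1 ha).le

theorem WLevelCompact.exists_wCompact_sublevel_subset {X H : Type*} [NormedAddCommGroup X]
    [NormedSpace ℝ X] [NormedAddCommGroup H] [NormedSpace ℝ H] {f : X → H → EReal}
    (hf : WLevelCompact f) {Z : Set H} (hZ : WCompact Z) (α : ℝ) :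
    ∃ B : Set X, WCompact B ∧ ∀ z ∈ Z, {x | f x z ≤ (α : EReal)} ⊆ B := by
  choose U hU hmem B hB hsub using fun z₀ : H => hf z₀ α
  obtain ⟨t, ht⟩ := hZ.elim_finite_subcover (fun z₀ => show Set (WeakSpace ℝ H) from U z₀) hU
    fun z _ => Set.mem_iUnion.2 ⟨z, hmem z⟩
  refine ⟨⋃ i ∈ t, B i, t.finite_toSet.isCompact_biUnion fun i _ => hB i, fun z hz => ?_⟩
  obtain ⟨i, hi, hzi⟩ := Set.mem_iUnion₂.1 (ht hz)
  exact (hsub i z hzi).trans (Set.subset_biUnion_of_mem hi)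

section Lagrangian

variable {X H : Type*} [NormedAddCommGroup H] [InnerProductSpace ℝ H] {f : X → H → EReal}
  {σ : H → EReal} {A : H → H} {w : H} {c : ℝ} {x : X} {z : H}

theorem exists_coe_of_lagr_le_coe (hf : f x z ≠ ⊥) (hσ : 0 ≤ σ z) (hc : 0 < c) {t : ℝ}
    (h : lagr f σ A w c x z ≤ t) : ∃ F v : ℝ, f x z = F ∧ σ z = v := by
  have hσ_ne_bot : σ z ≠ ⊥ := ne_bot_of_le_ne_bot (by simp) hσ
  have hfa_ne_bot : f x z - ((inner ℝ (A z) w : ℝ) : EReal) ≠ ⊥ := by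
    simp [sub_eq_add_neg, ← EReal.coe_neg, EReal.add_eq_bot_iff, hf]
  have hcσ_ne_bot : (c : EReal) * σ z ≠ ⊥ :=
    ne_bot_of_le_ne_bot (by simp) (EReal.mul_nonneg (EReal.coe_nonneg.2 hc.le) hσ)
  obtain ⟨hfa_ne_top, hcσ_ne_top⟩ := (EReal.add_ne_top_iff_ne_top₂ hfa_ne_bot hcσ_ne_bot).1
    (ne_top_of_le_ne_top (EReal.coe_ne_top t) h)
  have hf_ne_top : f x z ≠ ⊤ := by
    rintro hfz
    simp [hfz, sub_eq_add_neg, ← EReal.coe_neg] at hfa_ne_top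
  have hσ_ne_top : σ z ≠ ⊤ := by
    rintro hσz
    simp [hσz, EReal.coe_mul_top_of_pos hc] at hcσ_ne_top
  exact ⟨_, _, (EReal.coe_toReal hf_ne_top hf).symm, (EReal.coe_toReal hσ_ne_top hσ_ne_bot).symm⟩

theorem sigma_le_and_f_le_of_lagr_le (hf : f x z ≠ ⊥) (hσ : 0 ≤ σ z)
    (hA : (‖A z‖ : EReal) ≤ σ z) {yh : H} {ch qh t K : ℝ} (hch : 0 ≤ ch) (hK : 0 < K)
    (hq : (qh : EReal) ≤ lagr f σ A yh ch x z) (hqt : qh ≤ t)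
    (ht : t < qh + K * (c - ch - ‖w - yh‖)) (h : lagr f σ A w c x z ≤ t) :
    σ z ≤ K ∧ f x z ≤ ((t + K * ‖w‖ : ℝ) : EReal) := by
  have hd : 0 < c - ch - ‖w - yh‖ := pos_of_mul_pos_right (by linarith) hK.le
  have hc : 0 < c := by linarith [norm_nonneg (w - yh)]
  obtain ⟨F, v, hF, hv⟩ := exists_coe_of_lagr_le_coe hf hσ hc h
  simp only [lagr, hF, hv] at h hq hA ⊢
  norm_cast at h hq hA ⊢
  have hv0 : 0 ≤ v := (norm_nonneg _).trans hA
  have hdiff : inner ℝ (A z) w - inner ℝ (A z) yh ≤ v * ‖w - yh‖ := by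
    rw [← inner_sub_right]
    exact (real_inner_le_norm _ _).trans (mul_le_mul_of_nonneg_right hA (norm_nonneg _))
  have hw : inner ℝ (A z) w ≤ v * ‖w‖ :=
    (real_inner_le_norm _ _).trans (mul_le_mul_of_nonneg_right hA (norm_nonneg _))
  have hvK : v ≤ K := by nlinarith
  refine ⟨hvK, ?_⟩
  nlinarith [mul_le_mul_of_nonneg_right hvK (norm_nonneg w), mul_nonneg hc.le hv0]

theorem dualq_le_lagr (y : H) (c : ℝ) (x : X) (z : H) :
    dualq f σ A y c ≤ lagr f σ A y c x z := by
  unfold dualq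
  exact (iInf_le _ x).trans (iInf_le _ z)

theorem dualq_eq_iInf_prod (y : H) (c : ℝ) :
    dualq f σ A y c = ⨅ p : X × H, lagr f σ A y c p.1 p.2 := by
  rw [dualq, iInf_prod]

theorem dualq_le_MD {y : H} (hc : 0 ≤ c) : dualq f σ A y c ≤ MD f σ A :=
  le_iSup₂_of_le y c (le_iSup_of_le hc le_rfl)

variable [NormedAddCommGroup X] [NormedSpace ℝ X]

theorem wLsc2_lagr (hf : WLsc2 fun p : X × H => f p.1 p.2) (hf_ne_bot : ∀ x z, f x z ≠ ⊥)
    (hσ : WLsc σ) (hσ_nonneg : ∀ z, 0 ≤ σ z) (hA : WUsc fun z => inner ℝ (A z) w) (hc : 0 < c) :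
    WLsc2 fun p : X × H => lagr f σ A w c p.1 p.2 := by
  have hsnd : Continuous (Prod.snd : WeakSpace ℝ X × WeakSpace ℝ H → WeakSpace ℝ H) :=
    continuous_snd
  exact LowerSemicontinuous.sub_coe_add_coe_mul hf (fun p => hf_ne_bot p.1 p.2) (hA.comp hsnd)
    (hσ.comp hsnd) (fun p => hσ_nonneg p.2) hc

theorem wCompact2_lagr_sublevel [CompleteSpace H] (hf : WLsc2 fun p : X × H => f p.1 p.2)
    (hf_ne_bot : ∀ x z, f x z ≠ ⊥) (hflev : WLevelCompact f) (hσ : WLsc σ)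
    (hσ_nonneg : ∀ z, 0 ≤ σ z) (hA0 : ∀ z, (‖A z‖ : EReal) ≤ σ z)
    (hA1 : WUsc fun z => inner ℝ (A z) w) {K : ℝ} (hK : 0 < K)
    (hσK : IsBounded {z : H | σ z ≤ (K : EReal)}) {yh : H} {ch qh t : ℝ} (hch : 0 ≤ ch)
    (hq : (qh : EReal) ≤ dualq f σ A yh ch) (hqt : qh ≤ t)
    (ht : t < qh + K * (c - ch - ‖w - yh‖)) :
    WCompact2 {p : X × H | lagr f σ A w c p.1 p.2 ≤ (t : EReal)} := by
  have hc : 0 < c := by nlinarith [norm_nonneg (w - yh)]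
  have hZ : WCompact {z : H | σ z ≤ (K : EReal)} :=
    (InnerProductSpace.isReflexiveSpace H).wCompact_of_isBounded_of_isClosed (X := H) hσK
      (hσ.isClosed_preimage K)
  obtain ⟨B, hB, hBsub⟩ := hflev.exists_wCompact_sublevel_subset hZ (t + K * ‖w‖)
  refine (IsCompact.prod hB hZ).of_isClosed_subset
    ((wLsc2_lagr hf hf_ne_bot hσ hσ_nonneg hA1 hc).isClosed_preimage t) ?_
  show {p : X × H | _} ⊆ B ×ˢ {z : H | σ z ≤ (K : EReal)}
  rintro ⟨x, z⟩ hxz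
  obtain ⟨hσz, hfxz⟩ := sigma_le_and_f_le_of_lagr_le (hf_ne_bot x z) (hσ_nonneg z) (hA0 z) hch
    hK (hq.trans (dualq_le_lagr yh ch x z)) hqt ht hxz
  exact ⟨hBsub z hσz hfxz, hσz⟩

end Lagrangian

theorem levelSet_weaklyCompact_and_attainment_general
    {X H : Type*} [NormedAddCommGroup X] [NormedSpace ℝ X]
    [NormedAddCommGroup H] [InnerProductSpace ℝ H] [CompleteSpace H]
    (φ : X → EReal)
    (f : X → H → EReal)
    (hfproper : (∀ x z, f x z ≠ ⊥) ∧ (∃ x z, f x z ≠ ⊤))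
    (hflsc : WLsc2 fun p : X × H => f p.1 p.2)
    (hflev : WLevelCompact f)
    (σ : H → EReal)
    (hσpos : ∀ z, 0 ≤ σ z)
    (hσwlsc : WLsc σ)
    (A : H → H)
    (hA0 : ∀ z, (‖A z‖ : EReal) ≤ σ z)
    (hA1 : ∀ y : H, WUsc fun z => (inner ℝ (A z) y : ℝ))
    (Kσ : ℝ) (hKσpos : 0 < Kσ) (hσcc : IsBounded {z : H | σ z ≤ (Kσ : EReal)})
    (hSD : MP φ = MD f σ A)
    (yh : H) (ch : ℝ) (hch : 0 ≤ ch)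
    (qh : ℝ) (hqh : dualq f σ A yh ch = (qh : EReal))
    (s : ℝ) (hs : MP φ ≤ (s : EReal)) :
    ∀ (w : H) (c : ℝ), 0 ≤ c → ch + (s - qh) / Kσ + ‖w - yh‖ < c →
      ({p : X × H | lagr f σ A w c p.1 p.2 ≤ (s : EReal)}).Nonempty ∧
      WCompact2 {p : X × H | lagr f σ A w c p.1 p.2 ≤ (s : EReal)} ∧
      ∃ (x : X) (z : H), dualq f σ A w c = lagr f σ A w c x z := by
  intro w c hc0 hcw
  have hMD_le : MD f σ A ≤ s := hSD ▸ hs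
  have hqs : qh ≤ s := by exact_mod_cast hqh ▸ (dualq_le_MD hch).trans hMD_le
  have hsc : s < qh + Kσ * (c - ch - ‖w - yh‖) := by
    have := (div_lt_iff₀' hKσpos).1 (by linarith : (s - qh) / Kσ < c - ch - ‖w - yh‖)
    linarith
  have hcompact : ∀ t : ℝ, qh ≤ t → t < qh + Kσ * (c - ch - ‖w - yh‖) →
      WCompact2 {p : X × H | lagr f σ A w c p.1 p.2 ≤ (t : EReal)} := fun t hqt ht =>
    wCompact2_lagr_sublevel hflsc hfproper.1 hflev hσwlsc hσpos hA0 (hA1 w) hKσpos hσcc hch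
      hqh.ge hqt ht
  have hq_le : dualq f σ A w c ≤ s := (dualq_le_MD hc0).trans hMD_le
  have hc : 0 < c := by nlinarith [norm_nonneg (w - yh)]
  obtain ⟨s', hss', hs'⟩ := exists_between hsc
  obtain ⟨⟨x, z⟩, hxz⟩ := LowerSemicontinuous.exists_eq_iInf_of_isCompact_sublevel
    (wLsc2_lagr hflsc hfproper.1 hσwlsc hσpos (hA1 w) hc)
    (hcompact s' (hqs.trans hss'.le) hs')
    (show ⨅ p : X × H, lagr f σ A w c p.1 p.2 < s' by
      rw [← dualq_eq_iInf_prod]; exact hq_le.trans_lt (by exact_mod_cast hss'))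
  change lagr f σ A w c x z = ⨅ p : X × H, lagr f σ A w c p.1 p.2 at hxz
  rw [← dualq_eq_iInf_prod] at hxz
  exact ⟨⟨(x, z), hxz.trans_le hq_le⟩, hcompact s hqs hsc, x, z, hxz.symm⟩

/-- For `(w,c)` in the set `T̃(s)`, the level set of the function
`Φ_{(w,c)}` at height `s` is nonempty and weakly compact, and the infimum defining
`q(w,c)` is attained. -/
theorem levelSet_weaklyCompact_and_attainment
    {X H : Type*} [NormedAddCommGroup X] [NormedSpace ℝ X] [CompleteSpace X]
    [NormedAddCommGroup H] [InnerProductSpace ℝ H] [CompleteSpace H]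
    (hrefl : IsReflexiveSpace X)
    (φ : X → EReal)
    (hφproper : (∀ x, φ x ≠ ⊥) ∧ (∃ x, φ x ≠ ⊤))
    (hφwlsc : WLsc φ)
    (hφlev : ∀ α : ℝ, WCompact {x : X | φ x ≤ (α : EReal)})
    (f : X → H → EReal)
    (hdual : ∀ x, f x 0 = φ x)
    (hfproper : (∀ x z, f x z ≠ ⊥) ∧ (∃ x z, f x z ≠ ⊤))
    (hflsc : WLsc2 fun p : X × H => f p.1 p.2)
    (hflev : WLevelCompact f)
    (σ : H → EReal)
    (hσpos : ∀ z, 0 ≤ σ z)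
    (hσ0 : σ 0 = 0)
    (hσargmin : ∀ z, σ z = 0 → z = 0)
    (hσwlsc : WLsc σ)
    (A : H → H)
    (hA0 : ∀ z, (‖A z‖ : EReal) ≤ σ z)
    (hA1 : ∀ y : H, WUsc fun z => (inner ℝ (A z) y : ℝ))
    (Kσ : ℝ) (hKσpos : 0 < Kσ) (hσcc : IsBounded {z : H | σ z ≤ (Kσ : EReal)})
    (hSD : MP φ = MD f σ A)
    (yh : H) (ch : ℝ) (hch : 0 ≤ ch)
    (qh : ℝ) (hqh : dualq f σ A yh ch = (qh : EReal))
    (s : ℝ) (hs : MP φ ≤ (s : EReal)) :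
    ∀ (w : H) (c : ℝ), 0 ≤ c → ch + (s - qh) / Kσ + ‖w - yh‖ < c →
      ({p : X × H | lagr f σ A w c p.1 p.2 ≤ (s : EReal)}).Nonempty ∧
      WCompact2 {p : X × H | lagr f σ A w c p.1 p.2 ≤ (s : EReal)} ∧
      ∃ (x : X) (z : H), dualq f σ A w c = lagr f σ A w c x z :=
  levelSet_weaklyCompact_and_attainment_general φ f hfproper hflsc hflev σ hσpos hσwlsc A hA0 hA1 Kσ
    hKσpos hσcc hSD yh ch hch qh hqh s hs
end
end
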